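/- arXiv:1410.0128 — 3 statements merged into one kernel-verified Lean document; each statement's English description precedes it below -/
import Mathlib

section
/- For all real constants a > 0, b > 0, c > 0, the function f(P) = (a·P + c) / Real.log (1 + b·P) is quasiconvex on the open interval (0, ∞); that is, for every real t, the sublevel set {P ∈ (0, ∞) : f(P) ≤ t} is convex. -/
/-!
A ratio `N / D` of a nonnegative convex function by a positive concave one is quasiconvex: for
`t < 0` its `t`-sublevel set is empty, and for `t ≥ 0` it is the sublevel set `{N - t D ≤ 0}` of
a convex function. Here `N P = a P + c` is affine and `D P = log (1 + b P)` is the concave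
logarithm composed with an affine map.
-/

open Set Real

theorem ConvexOn.quasiconvexOn_div {𝕜 E : Type*} [Field 𝕜] [LinearOrder 𝕜] [IsStrictOrderedRing 𝕜]
    [AddCommGroup E] [Module 𝕜 E] {s : Set E} {N D : E → 𝕜}
    (hN : ConvexOn 𝕜 s N) (hN_nonneg : ∀ x ∈ s, 0 ≤ N x)
    (hD : ConcaveOn 𝕜 s D) (hD_pos : ∀ x ∈ s, 0 < D x) :
    QuasiconvexOn 𝕜 s fun x => N x / D x := by
  intro t
  rcases lt_or_ge t 0 with ht | ht
  · convert convex_empty (𝕜 := 𝕜) (E := E)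
    refine eq_empty_of_forall_notMem fun x ⟨hx, hle⟩ => ?_
    exact (ht.trans_le (div_nonneg (hN_nonneg x hx) (hD_pos x hx).le)).not_ge hle
  · have hsublevel : {x ∈ s | N x / D x ≤ t} = {x ∈ s | (N - t • D) x ≤ 0} := by
      refine sep_ext_iff.mpr fun x hx => ?_
      rw [div_le_iff₀ (hD_pos x hx), Pi.sub_apply, Pi.smul_apply, smul_eq_mul, mul_comm,
        sub_nonpos]
    rw [hsublevel]
    exact (hN.sub (hD.smul ht)).convex_le 0

theorem Real.concaveOn_log_one_add_mul {b : ℝ} (hb : 0 ≤ b) :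
    ConcaveOn ℝ (Ici 0) fun P => log (1 + b * P) := by
  have hcomp : (fun P => log (1 + b * P)) = log ∘ AffineMap.lineMap 1 (1 + b) := by
    ext P
    simp only [Function.comp_apply, AffineMap.lineMap_apply_ring', add_sub_cancel_left]
    ring_nf
  have hsub : Ici (0 : ℝ) ⊆ AffineMap.lineMap 1 (1 + b) ⁻¹' Ioi 0 := fun P (hP : 0 ≤ P) => by
    simp only [mem_preimage, AffineMap.lineMap_apply_ring', add_sub_cancel_left, mem_Ioi]
    positivity
  rw [hcomp]
  exact (strictConcaveOn_log_Ioi.concaveOn.comp_affineMap _).subset hsub (convex_Ici 0)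

/-- For all real constants `a > 0`, `b > 0`, `c > 0`, the function
`f(P) = (a·P + c) / log (1 + b·P)` is quasiconvex on `(0, ∞)`:
for every real `t`, the sublevel set `{P ∈ (0, ∞) | f P ≤ t}` is convex. -/
theorem quasiconvex_energy_per_bit (a b c : ℝ) (ha : 0 < a) (hb : 0 < b) (hc : 0 < c) :
    ∀ t : ℝ,
      Convex ℝ {P : ℝ | P ∈ Set.Ioi (0 : ℝ) ∧ (a * P + c) / Real.log (1 + b * P) ≤ t} :=
  ConvexOn.quasiconvexOn_div (((convexOn_id (convex_Ioi 0)).smul ha.le).add_const c)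
    (fun P hP => (add_pos (mul_pos ha hP) hc).le)
    ((concaveOn_log_one_add_mul hb.le).subset Ioi_subset_Ici_self (convex_Ioi 0))
    (fun P hP => log_pos (by simpa using mul_pos hb hP))
end

section
/- For all real constants a > 0, b > 0, c > 0, the function f(P) = (a·P + c) / Real.log (1 + b·P) attains a global minimum on (0, ∞) at a unique point: there exists exactly one P* ∈ (0, ∞) such that f(P*) ≤ f(P) for all P ∈ (0, ∞). -/
/-!
Writing `f P = (a P + c) / log (1 + b P)`, one has `f' = g / log (1 + b P) ^ 2` with
`g P = a log (1 + b P) - b (a P + c) / (1 + b P)`. Since `g' = b² (a P + c) / (1 + b P)² > 0`,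
`g (0) = -b c < 0` and `g P → ∞`, the numerator `g` has a single zero `P₀ > 0`; so `f` strictly
decreases on `(0, P₀]` and strictly increases on `[P₀, ∞)`, and `P₀` is its unique minimiser.
-/

open Real Set

theorem lt_of_strictAntiOn_of_strictMonoOn {α β : Type*} [LinearOrder α] [Preorder β]
    {f : α → β} {s : Set α} {p q : α} (hanti : StrictAntiOn f (s ∩ Iic p))
    (hmono : StrictMonoOn f (s ∩ Ici p)) (hp : p ∈ s) (hq : q ∈ s) (hne : q ≠ p) :
    f p < f q := by
  rcases hne.lt_or_gt with hlt | hgt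
  · exact hanti ⟨hq, hlt.le⟩ ⟨hp, le_rfl⟩ hlt
  · exact hmono ⟨hp, le_rfl⟩ ⟨hq, hgt.le⟩ hgt

theorem existsUnique_min_of_strictAntiOn_of_strictMonoOn {α β : Type*} [LinearOrder α]
    [Preorder β] {f : α → β} {s : Set α} {p : α} (hanti : StrictAntiOn f (s ∩ Iic p))
    (hmono : StrictMonoOn f (s ∩ Ici p)) (hp : p ∈ s) :
    ∃! x, x ∈ s ∧ ∀ q ∈ s, f x ≤ f q := by
  have hlt {q} := lt_of_strictAntiOn_of_strictMonoOn hanti hmono hp (q := q)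
  refine ⟨p, ⟨hp, fun q hq => ?_⟩, fun q ⟨hq, hqmin⟩ => ?_⟩
  · rcases eq_or_ne q p with rfl | hne
    · exact le_rfl
    · exact (hlt hq hne).le
  · by_contra hne
    exact (hlt hq hne).not_ge (hqmin p hp)

noncomputable def energyPerBit (a b c P : ℝ) : ℝ :=
  (a * P + c) / log (1 + b * P)

noncomputable def energyPerBitDerivNum (a b c P : ℝ) : ℝ :=
  a * log (1 + b * P) - b * (a * P + c) / (1 + b * P)

section

variable {a b c P : ℝ}

theorem hasDerivAt_energyPerBit (hb : 0 < b) (hP : 0 < P) :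
    HasDerivAt (energyPerBit a b c) (energyPerBitDerivNum a b c P / log (1 + b * P) ^ 2) P := by
  have h1 : 1 + b * P ≠ 0 := by positivity
  have hlog : log (1 + b * P) ≠ 0 := (log_pos (by nlinarith)).ne'
  have hlin : HasDerivAt (fun P => 1 + b * P) b P := by
    simpa using ((hasDerivAt_id P).const_mul b).const_add 1
  have hnum : HasDerivAt (fun P => a * P + c) a P := by
    simpa using ((hasDerivAt_id P).const_mul a).add_const c
  refine (hnum.div (hlin.log h1) hlog).congr_deriv ?_
  unfold energyPerBitDerivNum
  field_simp

theorem hasDerivAt_energyPerBitDerivNum (h : 0 < 1 + b * P) :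
    HasDerivAt (energyPerBitDerivNum a b c) (b ^ 2 * (a * P + c) / (1 + b * P) ^ 2) P := by
  have hlin : HasDerivAt (fun P => 1 + b * P) b P := by
    simpa using ((hasDerivAt_id P).const_mul b).const_add 1
  have hnum : HasDerivAt (fun P => a * P + c) a P := by
    simpa using ((hasDerivAt_id P).const_mul a).add_const c
  refine (((hlin.log h.ne').const_mul a).sub ((hnum.const_mul b).div hlin h.ne')).congr_deriv ?_
  field_simp
  ring

theorem strictMonoOn_energyPerBitDerivNum (ha : 0 < a) (hb : 0 < b) (hc : 0 ≤ c) :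
    StrictMonoOn (energyPerBitDerivNum a b c) (Ici 0) := by
  have hderiv : ∀ P ∈ Ici (0 : ℝ), HasDerivAt (energyPerBitDerivNum a b c)
      (b ^ 2 * (a * P + c) / (1 + b * P) ^ 2) P := fun P (hP : 0 ≤ P) =>
    hasDerivAt_energyPerBitDerivNum (by positivity)
  refine strictMonoOn_of_deriv_pos (convex_Ici 0)
    (fun P hP => (hderiv P hP).continuousAt.continuousWithinAt) fun P hP => ?_
  rw [interior_Ici] at hP
  have hP : 0 < P := hP
  rw [(hderiv P hP.le).deriv]
  positivity

theorem sub_le_energyPerBitDerivNum (ha : 0 ≤ a) (hb : 0 ≤ b) (hc : 0 ≤ c) (hP : 0 ≤ P) :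
    a * log (1 + b * P) - (a + b * c) ≤ energyPerBitDerivNum a b c P := by
  have h1 : 0 < 1 + b * P := by positivity
  have hfrac : b * (a * P + c) / (1 + b * P) ≤ a + b * c := by
    rw [div_le_iff₀ h1]
    nlinarith [mul_nonneg (mul_nonneg (mul_nonneg hb hb) hc) hP]
  unfold energyPerBitDerivNum
  linarith

theorem exists_energyPerBitDerivNum_pos (ha : 0 < a) (hb : 0 < b) (hc : 0 ≤ c) :
    ∃ P, 0 < P ∧ 0 < energyPerBitDerivNum a b c P := by
  set K := (a + b * c) / a
  refine ⟨exp K / b, by positivity, ?_⟩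
  have hK : K < log (1 + b * (exp K / b)) := by
    rw [mul_div_cancel₀ _ hb.ne', lt_log_iff_exp_lt (by positivity)]
    linarith
  have hlog : a + b * c < a * log (1 + b * (exp K / b)) := by
    rwa [div_lt_iff₀' ha] at hK
  linarith [sub_le_energyPerBitDerivNum ha.le hb.le hc (P := exp K / b) (by positivity)]

theorem exists_energyPerBitDerivNum_eq_zero (ha : 0 < a) (hb : 0 < b) (hc : 0 < c) :
    ∃ P₀, 0 < P₀ ∧ energyPerBitDerivNum a b c P₀ = 0 := by
  obtain ⟨P₁, hP₁, hpos⟩ := exists_energyPerBitDerivNum_pos ha hb hc.le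
  have hcont : ContinuousOn (energyPerBitDerivNum a b c) (Icc 0 P₁) := fun P hP =>
    (hasDerivAt_energyPerBitDerivNum (by nlinarith [hP.1])).continuousAt.continuousWithinAt
  have hneg : energyPerBitDerivNum a b c 0 < 0 := by
    simp only [energyPerBitDerivNum, mul_zero, add_zero, log_one, zero_add, div_one, zero_sub,
      Left.neg_neg_iff]
    positivity
  obtain ⟨P₀, hP₀, hzero⟩ := intermediate_value_Ioo hP₁.le hcont ⟨hneg, hpos⟩
  exact ⟨P₀, hP₀.1, hzero⟩

theorem continuousOn_energyPerBit (hb : 0 < b) : ContinuousOn (energyPerBit a b c) (Ioi 0) :=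
  fun _ hP => (hasDerivAt_energyPerBit hb hP).continuousAt.continuousWithinAt

theorem strictAntiOn_energyPerBit (ha : 0 < a) (hb : 0 < b) (hc : 0 ≤ c) {P₀ : ℝ}
    (hP₀ : energyPerBitDerivNum a b c P₀ = 0) :
    StrictAntiOn (energyPerBit a b c) (Ioi 0 ∩ Iic P₀) := by
  refine strictAntiOn_of_deriv_neg (convex_Ioc 0 P₀)
    ((continuousOn_energyPerBit hb).mono Ioc_subset_Ioi_self) fun P hP => ?_
  rw [interior_Ioc] at hP
  rw [(hasDerivAt_energyPerBit hb hP.1).deriv]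
  have hnum : energyPerBitDerivNum a b c P < 0 :=
    hP₀ ▸ strictMonoOn_energyPerBitDerivNum ha hb hc hP.1.le (hP.1.trans hP.2).le hP.2
  have hlog : 0 < log (1 + b * P) := log_pos (by nlinarith [hP.1])
  exact div_neg_of_neg_of_pos hnum (by positivity)

theorem strictMonoOn_energyPerBit (ha : 0 < a) (hb : 0 < b) (hc : 0 ≤ c) {P₀ : ℝ}
    (hP₀pos : 0 < P₀) (hP₀ : energyPerBitDerivNum a b c P₀ = 0) :
    StrictMonoOn (energyPerBit a b c) (Ici P₀) := by
  refine strictMonoOn_of_deriv_pos (convex_Ici P₀)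
    ((continuousOn_energyPerBit hb).mono fun P (hP : P₀ ≤ P) => hP₀pos.trans_le hP)
    fun P hP => ?_
  rw [interior_Ici] at hP
  have hP : P₀ < P := hP
  have hPpos := hP₀pos.trans hP
  rw [(hasDerivAt_energyPerBit hb hPpos).deriv]
  have hnum : 0 < energyPerBitDerivNum a b c P :=
    hP₀ ▸ strictMonoOn_energyPerBitDerivNum ha hb hc hP₀pos.le hPpos.le hP
  have hlog : 0 < log (1 + b * P) := log_pos (by nlinarith)
  positivity

end

/-- For all real constants `a > 0`, `b > 0`, `c > 0`, the function
`f(P) = (a·P + c) / log (1 + b·P)` attains a global minimum on `(0, ∞)` at a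
unique point: there exists exactly one `P* ∈ (0, ∞)` with `f P* ≤ f P`
for all `P ∈ (0, ∞)`. -/
theorem exists_unique_global_min_energy_per_bit (a b c : ℝ)
    (ha : 0 < a) (hb : 0 < b) (hc : 0 < c) :
    ∃! Pstar : ℝ, Pstar ∈ Set.Ioi (0 : ℝ) ∧
      ∀ P ∈ Set.Ioi (0 : ℝ),
        (a * Pstar + c) / Real.log (1 + b * Pstar) ≤
          (a * P + c) / Real.log (1 + b * P) := by
  obtain ⟨P₀, hP₀pos, hP₀⟩ := exists_energyPerBitDerivNum_eq_zero ha hb hc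
  exact existsUnique_min_of_strictAntiOn_of_strictMonoOn
    (strictAntiOn_energyPerBit ha hb hc.le hP₀)
    ((strictMonoOn_energyPerBit ha hb hc.le hP₀pos hP₀).mono inter_subset_right) hP₀pos
end

section
/- For all real constants a > 0, b > 0, c > 0, the function f(P) = (a·P + c) / Real.log (1 + b·P) is unimodal on (0, ∞): there exists P* ∈ (0, ∞) such that f is antitone (non-increasing) on the interval (0, P*] and monotone (non-decreasing) on the interval [P*, ∞). -/
/-!
Writing `f = N / L` with `N P = a P + c` and `L P = log (1 + b P)`, one has `f' = g / L²` where
`g = a L - b N / (1 + b P)` (`derivNumerator`). Since `g' = b² N / (1 + b P)² > 0`, `g` is strictly increasing on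
`[0, ∞)`; it starts at `g 0 = -b c < 0` and becomes positive because `L` is unbounded while
`b N / (1 + b P) ≤ a + b c`. Its unique zero `P*` is where `f` turns from decreasing to increasing.
-/

open Set

lemma antitoneOn_Ioc_and_monotoneOn_Ici_of_hasDerivAt {f f' : ℝ → ℝ} {q p : ℝ} (hqp : q < p)
    (hf : ∀ x ∈ Ioi q, HasDerivAt f (f' x) x)
    (hf'_nonpos : ∀ x ∈ Ioo q p, f' x ≤ 0) (hf'_nonneg : ∀ x ∈ Ioi p, 0 ≤ f' x) :
    AntitoneOn f (Ioc q p) ∧ MonotoneOn f (Ici p) := by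
  have hcont : ContinuousOn f (Ioi q) := fun x hx => (hf x hx).continuousAt.continuousWithinAt
  constructor
  · refine antitoneOn_of_hasDerivWithinAt_nonpos (convex_Ioc q p)
      (hcont.mono Ioc_subset_Ioi_self) (fun x hx => ?_) (by rwa [interior_Ioc])
    rw [interior_Ioc] at hx ⊢
    exact (hf x hx.1).hasDerivWithinAt
  · refine monotoneOn_of_hasDerivWithinAt_nonneg (convex_Ici p)
      (hcont.mono (Ici_subset_Ioi.mpr hqp)) (fun x hx => ?_) (by rwa [interior_Ici])
    rw [interior_Ici] at hx ⊢
    exact (hf x (hqp.trans hx)).hasDerivWithinAt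

namespace EnergyPerBit

variable (a b c : ℝ)

noncomputable def energyPerBit (P : ℝ) : ℝ := (a * P + c) / Real.log (1 + b * P)

noncomputable def derivNumerator (P : ℝ) : ℝ :=
  a * Real.log (1 + b * P) - b * (a * P + c) / (1 + b * P)

variable {a b c}

lemma hasDerivAt_log_one_add_mul {P : ℝ} (hP : 1 + b * P ≠ 0) :
    HasDerivAt (fun P => Real.log (1 + b * P)) (b / (1 + b * P)) P := by
  simpa using (((hasDerivAt_id P).const_mul b).const_add 1).log hP

lemma hasDerivAt_energyPerBit {P : ℝ} (hP : 1 + b * P ≠ 0) (hL : Real.log (1 + b * P) ≠ 0) :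
    HasDerivAt (energyPerBit a b c) (derivNumerator a b c P / Real.log (1 + b * P) ^ 2) P := by
  have hN : HasDerivAt (fun P => a * P + c) a P := by
    simpa using ((hasDerivAt_id P).const_mul a).add_const c
  refine (hN.div (hasDerivAt_log_one_add_mul hP) hL).congr_deriv ?_
  unfold derivNumerator
  field_simp

lemma hasDerivAt_derivNumerator {P : ℝ} (hP : 1 + b * P ≠ 0) :
    HasDerivAt (derivNumerator a b c) (b ^ 2 * (a * P + c) / (1 + b * P) ^ 2) P := by
  have hN : HasDerivAt (fun P => b * (a * P + c)) (b * a) P := by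
    simpa using (((hasDerivAt_id P).const_mul a).add_const c).const_mul b
  have hD : HasDerivAt (fun P => 1 + b * P) b P := by
    simpa using ((hasDerivAt_id P).const_mul b).const_add 1
  refine (((hasDerivAt_log_one_add_mul hP).const_mul a).sub (hN.div hD hP)).congr_deriv ?_
  field_simp
  ring

lemma strictMonoOn_derivNumerator (ha : 0 ≤ a) (hb : 0 < b) (hc : 0 < c) :
    StrictMonoOn (derivNumerator a b c) (Ici 0) := by
  have hpos : ∀ P ∈ Ici (0 : ℝ), 0 < 1 + b * P := fun P hP => by
    have : 0 ≤ b * P := mul_nonneg hb.le hP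
    linarith
  have hderiv : ∀ P ∈ Ici (0 : ℝ),
      HasDerivAt (derivNumerator a b c) (b ^ 2 * (a * P + c) / (1 + b * P) ^ 2) P :=
    fun P hP => hasDerivAt_derivNumerator (hpos P hP).ne'
  refine strictMonoOn_of_hasDerivWithinAt_pos (convex_Ici 0)
    (fun P hP => (hderiv P hP).continuousAt.continuousWithinAt)
    (fun P hP => (hderiv P (interior_subset hP)).hasDerivWithinAt) (fun P hP => ?_)
  rw [interior_Ici] at hP
  have hN : 0 < a * P + c := by nlinarith [mem_Ioi.mp hP]
  exact div_pos (mul_pos (pow_pos hb 2) hN) (pow_pos (hpos P (Ioi_subset_Ici_self hP)) 2)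

lemma derivNumerator_zero : derivNumerator a b c 0 = -(b * c) := by
  simp [derivNumerator]

lemma exists_derivNumerator_pos (ha : 0 < a) (hb : 0 < b) (hc : 0 ≤ c) :
    ∃ P, 0 < P ∧ 0 < derivNumerator a b c P := by
  set P := Real.exp ((a + b * c) / a) / b
  have hP : 0 < P := by positivity
  have hbP : b * P = Real.exp ((a + b * c) / a) := mul_div_cancel₀ _ hb.ne'
  have hlog : a + b * c < a * Real.log (1 + b * P) := by
    have : (a + b * c) / a < Real.log (1 + b * P) := by
      rw [hbP, Real.lt_log_iff_exp_lt (by positivity)]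
      linarith
    rw [div_lt_iff₀ ha] at this
    linarith
  -- `b (a P + c) ≤ (a + b c) (1 + b P)` expands to `0 ≤ a + b² c P`
  have hfrac : b * (a * P + c) / (1 + b * P) ≤ a + b * c := by
    rw [div_le_iff₀ (by positivity)]
    nlinarith [mul_nonneg (mul_nonneg hb.le hb.le) (mul_nonneg hc hP.le)]
  exact ⟨P, hP, by unfold derivNumerator; linarith⟩

lemma exists_derivNumerator_eq_zero (ha : 0 < a) (hb : 0 < b) (hc : 0 < c) :
    ∃ P, 0 < P ∧ derivNumerator a b c P = 0 := by
  obtain ⟨P₁, hP₁, hgP₁⟩ := exists_derivNumerator_pos ha hb hc.le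
  have hcont : ContinuousOn (derivNumerator a b c) (Icc 0 P₁) := fun P hP =>
    (hasDerivAt_derivNumerator (by nlinarith [hP.1] : 1 + b * P ≠ 0)).continuousAt.continuousWithinAt
  have hg0 : derivNumerator a b c 0 < 0 := by
    rw [derivNumerator_zero]
    exact neg_neg_of_pos (mul_pos hb hc)
  obtain ⟨P, hP, hgP⟩ := intermediate_value_Ioo hP₁.le hcont ⟨hg0, hgP₁⟩
  exact ⟨P, hP.1, hgP⟩

end EnergyPerBit

open EnergyPerBit in
/-- For all real constants `a > 0`, `b > 0`, `c > 0`, the function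
`f(P) = (a·P + c) / log (1 + b·P)` is unimodal on `(0, ∞)`:
there exists `P* ∈ (0, ∞)` such that `f` is antitone on `(0, P*]` and
monotone on `[P*, ∞)`. -/
theorem unimodal_energy_per_bit (a b c : ℝ) (ha : 0 < a) (hb : 0 < b) (hc : 0 < c) :
    ∃ Pstar ∈ Set.Ioi (0 : ℝ),
      AntitoneOn (fun P : ℝ => (a * P + c) / Real.log (1 + b * P)) (Set.Ioc 0 Pstar) ∧
      MonotoneOn (fun P : ℝ => (a * P + c) / Real.log (1 + b * P)) (Set.Ici Pstar) := by
  obtain ⟨Pstar, hPstar, hzero⟩ := exists_derivNumerator_eq_zero ha hb hc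
  have hmono := strictMonoOn_derivNumerator ha.le hb hc
  have hlog_pos : ∀ P ∈ Ioi (0 : ℝ), 0 < Real.log (1 + b * P) := fun P hP =>
    Real.log_pos (by nlinarith [mem_Ioi.mp hP])
  refine ⟨Pstar, hPstar, antitoneOn_Ioc_and_monotoneOn_Ici_of_hasDerivAt hPstar
    (fun P hP => hasDerivAt_energyPerBit (by nlinarith [mem_Ioi.mp hP]) (hlog_pos P hP).ne')
    (fun P hP => div_nonpos_of_nonpos_of_nonneg ?_ (sq_nonneg _))
    (fun P hP => div_nonneg ?_ (sq_nonneg _))⟩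
  · rw [← hzero]
    exact (hmono (mem_Ici.mpr hP.1.le) (mem_Ici.mpr hPstar.le) hP.2).le
  · rw [← hzero]
    exact (hmono (mem_Ici.mpr hPstar.le) (mem_Ici.mpr (hPstar.trans hP).le) hP).le
end
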